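/- Let α, β be nonzero reals with α² ≠ β² and (β − α)/(β + α) > 0. Let τ : ℤ × ℤ × ℝ² → ℝ be everywhere positive and smooth in the last two variables (y_0, y_2), and suppose τ satisfies, for all l, k ∈ ℤ and all (y_0, y_2): (i) 2α τ(l+1,k) τ(l,k) − (α+β) τ(l,k+1) τ(l+1,k−1) − (α−β) τ(l,k−1) τ(l+1,k+1) = 0, and (ii) αβ² D_{y_2}( 2α τ(l+1,k)·τ(l,k) − (α+β) τ(l,k+1)·τ(l+1,k−1) − (α−β) τ(l,k−1)·τ(l+1,k+1) ) = D_{y_0}( 2(2β²−α²) τ(l+1,k)·τ(l,k) − α(α+β) τ(l,k+1)·τ(l+1,k−1) − α(α−β) τ(l,k−1)·τ(l+1,k+1) ). Fix l ∈ ℤ and define the derivations ∂_t = (2/α²) ∂_{y_0} − 2 ∂_{y_2} and ∂_x = ∂_{y_2} − (1/β²) ∂_{y_0}, and the functions u_k = log[ ((β−α)/(β+α))^{1/2} τ(l+1,k+1) τ(l,k) / (τ(l,k+1) τ(l+1,k)) ] and v_k = ∂_x log( τ(l,k+2)/τ(l,k) ). Assume moreover that u_{k+1}(y_0,y_2) +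 u_k(y_0,y_2) ≠ 0 for all k ∈ ℤ and all (y_0, y_2). Then for all k and (y_0, y_2): ∂_t u_k = Δ_{−k}( ∂_x u_{k+1} / (1 − exp(−u_{k+1} − u_k)) − ∂_x u_k / (1 − exp(u_{k+1} + u_k)) − [ (1 + exp(u_{k+1} + u_k)) / (1 − exp(u_{k+1} + u_k)) ] v_k ), where Δ_{−k} F_k := F_k − F_{k−1} is the backward difference in the discrete index k. -/

import Mathlib

/-!
With `φ_j = logRatio τ l j = log (τ(l+1,j)/τ(l,j))` one has `u_k = log √q + φ_{k+1} − φ_k`,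
`q = (β−α)/(β+α)`, so `∂_t u_k = ∂_t φ_{k+1} − ∂_t φ_k` and the theorem telescopes once the
bracket `R_k = rhsBracket τ α β l k` is shown to equal `∂_t φ_{k+1}`.

For that, put `A = (α+β) τ(l,k+2) τ(l+1,k)` and `B = (α−β) τ(l,k) τ(l+1,k+2)`, so that
`e^{u_{k+1}+u_k} = −B/A`. The first bilinear equation at the centre `k+1` reads
`A + B = 2α τ(l+1,k+1) τ(l,k+1)`, and it turns `R_k` into
`−∂_x log(τ(l+1,k+1)/τ(l,k+1))
  − (A ∂_x log(τ(l,k+2)/τ(l+1,k)) + B ∂_x log(τ(l,k)/τ(l+1,k+2)))/(A+B)`.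
Since `D f·g = f g (∂ log f − ∂ log g)`, the second bilinear equation at the centre `k+1` evaluates
the last numerator as a multiple of `A + B`, and what remains is `∂_t φ_{k+1}`.
-/

noncomputable section

/-- Partial derivative in the first variable `y₀`. -/
def Py0 (F : ℝ → ℝ → ℝ) (y0 y2 : ℝ) : ℝ := deriv (fun s => F s y2) y0

/-- Partial derivative in the second variable `y₂`. -/
def Py2 (F : ℝ → ℝ → ℝ) (y0 y2 : ℝ) : ℝ := deriv (fun s => F y0 s) y2

/-- The derivation `∂_x = ∂_{y₂} − (1/β²) ∂_{y₀}`. -/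
def Px (β : ℝ) (F : ℝ → ℝ → ℝ) (y0 y2 : ℝ) : ℝ :=
  Py2 F y0 y2 - (1 / β ^ 2) * Py0 F y0 y2

/-- The derivation `∂_t = (2/α²) ∂_{y₀} − 2 ∂_{y₂}`. -/
def Pt (α : ℝ) (F : ℝ → ℝ → ℝ) (y0 y2 : ℝ) : ℝ :=
  (2 / α ^ 2) * Py0 F y0 y2 - 2 * Py2 F y0 y2

/-- Hirota bilinear operator in `y₀`: `D_{y₀} f·g = (∂_{y₀}f) g − f (∂_{y₀}g)`. -/
def Dy0 (f g : ℝ → ℝ → ℝ) (y0 y2 : ℝ) : ℝ :=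
  Py0 f y0 y2 * g y0 y2 - f y0 y2 * Py0 g y0 y2

/-- Hirota bilinear operator in `y₂`: `D_{y₂} f·g = (∂_{y₂}f) g − f (∂_{y₂}g)`. -/
def Dy2 (f g : ℝ → ℝ → ℝ) (y0 y2 : ℝ) : ℝ :=
  Py2 f y0 y2 * g y0 y2 - f y0 y2 * Py2 g y0 y2

/-- `u_k = log[ ((β−α)/(β+α))^{1/2} τ(l+1,k+1) τ(l,k) / (τ(l,k+1) τ(l+1,k)) ]`. -/
def uS (τ : ℤ → ℤ → ℝ → ℝ → ℝ) (α β : ℝ) (l k : ℤ) (y0 y2 : ℝ) : ℝ :=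
  Real.log (Real.sqrt ((β - α) / (β + α)) *
    (τ (l + 1) (k + 1) y0 y2 * τ l k y0 y2) / (τ l (k + 1) y0 y2 * τ (l + 1) k y0 y2))

/-- `v_k = ∂_x log( τ(l,k+2)/τ(l,k) )`. -/
def vS (τ : ℤ → ℤ → ℝ → ℝ → ℝ) (β : ℝ) (l k : ℤ) (y0 y2 : ℝ) : ℝ :=
  Px β (fun a b => Real.log (τ l (k + 2) a b / τ l k a b)) y0 y2

/-- The bracketed expression on the right-hand side of the first equation of the
differential-difference system, as a function of the discrete index `k`. -/
def rhsBracket (τ : ℤ → ℤ → ℝ → ℝ → ℝ) (α β : ℝ) (l k : ℤ) (y0 y2 : ℝ) : ℝ :=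
  Px β (uS τ α β l (k + 1)) y0 y2 /
      (1 - Real.exp (-uS τ α β l (k + 1) y0 y2 - uS τ α β l k y0 y2)) -
    Px β (uS τ α β l k) y0 y2 /
      (1 - Real.exp (uS τ α β l (k + 1) y0 y2 + uS τ α β l k y0 y2)) -
    ((1 + Real.exp (uS τ α β l (k + 1) y0 y2 + uS τ α β l k y0 y2)) /
      (1 - Real.exp (uS τ α β l (k + 1) y0 y2 + uS τ α β l k y0 y2))) *
      vS τ β l k y0 y2

open Real Function

theorem hasFDerivAt_log_div {E : Type*} [NormedAddCommGroup E] [NormedSpace ℝ E]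
    {f g : E → ℝ} {f' g' : StrongDual ℝ E} {x : E}
    (hf : HasFDerivAt f f' x) (hg : HasFDerivAt g g' x)
    (hf0 : ∀ z, f z ≠ 0) (hg0 : ∀ z, g z ≠ 0) :
    HasFDerivAt (fun z => log (f z / g z)) ((f x)⁻¹ • f' - (g x)⁻¹ • g') x := by
  have : (fun z => log (f z / g z)) = fun z => log (f z) - log (g z) :=
    funext fun z => log_div (hf0 z) (hg0 z)
  rw [this]
  exact (hf.log (hf0 x)).sub (hg.log (hg0 x))

section PartialDerivatives

variable {F G H : ℝ → ℝ → ℝ} {y0 y2 : ℝ}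

theorem Px_eq_fderiv (β : ℝ) (hF : DifferentiableAt ℝ (uncurry F) (y0, y2)) :
    Px β F y0 y2 = fderiv ℝ (uncurry F) (y0, y2) (-(1 / β ^ 2), 1) := by
  have h0 : HasDerivAt (fun s => F s y2) (fderiv ℝ (uncurry F) (y0, y2) (1, 0)) y0 :=
    HasFDerivAt.comp_hasDerivAt (l := uncurry F) y0 hF.hasFDerivAt
      ((hasDerivAt_id' y0).prodMk (hasDerivAt_const y0 y2))
  have h2 : HasDerivAt (fun s => F y0 s) (fderiv ℝ (uncurry F) (y0, y2) (0, 1)) y2 :=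
    HasFDerivAt.comp_hasDerivAt (l := uncurry F) y2 hF.hasFDerivAt
      ((hasDerivAt_const y2 y0).prodMk (hasDerivAt_id' y2))
  have hdir : ((-(1 / β ^ 2), 1) : ℝ × ℝ) = (0, 1) - (1 / β ^ 2) • (1, 0) := by
    ext <;> simp
  rw [Px, Py0, Py2, h0.deriv, h2.deriv, hdir, map_sub, map_smul, smul_eq_mul]

theorem Pt_eq_neg_two_mul_Px (α : ℝ) : Pt α F y0 y2 = -2 * Px α F y0 y2 := by
  rw [Pt, Px]
  ring

theorem Px_log_div (β : ℝ) {f g : ℝ → ℝ → ℝ}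
    (hf : DifferentiableAt ℝ (uncurry f) (y0, y2)) (hg : DifferentiableAt ℝ (uncurry g) (y0, y2))
    (hf0 : ∀ a b, f a b ≠ 0) (hg0 : ∀ a b, g a b ≠ 0) :
    Px β (fun a b => log (f a b / g a b)) y0 y2 =
      Px β f y0 y2 / f y0 y2 - Px β g y0 y2 / g y0 y2 := by
  have h : HasFDerivAt (uncurry fun a b => log (f a b / g a b)) _ (y0, y2) :=
    hasFDerivAt_log_div hf.hasFDerivAt hg.hasFDerivAt (fun z => hf0 z.1 z.2) (fun z => hg0 z.1 z.2)
  rw [Px_eq_fderiv β h.differentiableAt, h.fderiv, Px_eq_fderiv β hf, Px_eq_fderiv β hg]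
  simp [div_eq_inv_mul]

theorem Px_const_add_sub (β c : ℝ)
    (hG : DifferentiableAt ℝ (uncurry G) (y0, y2)) (hH : DifferentiableAt ℝ (uncurry H) (y0, y2)) :
    Px β (fun a b => c + G a b - H a b) y0 y2 = Px β G y0 y2 - Px β H y0 y2 := by
  have h : HasFDerivAt (uncurry fun a b => c + G a b - H a b) _ (y0, y2) :=
    (hG.hasFDerivAt.const_add c).sub hH.hasFDerivAt
  rw [Px_eq_fderiv β h.differentiableAt, h.fderiv, Px_eq_fderiv β hG, Px_eq_fderiv β hH]
  rfl

end PartialDerivatives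

def logRatio (τ : ℤ → ℤ → ℝ → ℝ → ℝ) (l j : ℤ) (a b : ℝ) : ℝ :=
  log (τ (l + 1) j a b / τ l j a b)

section TauFunction

variable {τ : ℤ → ℤ → ℝ → ℝ → ℝ} {α β : ℝ} {l : ℤ} {y0 y2 : ℝ}

theorem uS_eq_logRatio (hquot : 0 < (β - α) / (β + α)) (hτpos : ∀ l k y0 y2, 0 < τ l k y0 y2)
    (k : ℤ) :
    uS τ α β l k =
      fun a b => log √((β - α) / (β + α)) + logRatio τ l (k + 1) a b - logRatio τ l k a b := by
  funext a b
  have := hτpos (l + 1) (k + 1) a b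
  have := hτpos l k a b
  have := hτpos l (k + 1) a b
  have := hτpos (l + 1) k a b
  have hs : 0 < √((β - α) / (β + α)) := sqrt_pos.2 hquot
  rw [uS, logRatio, logRatio, ← log_mul (by positivity) (by positivity),
    ← log_div (by positivity) (by positivity)]
  congr 1
  field_simp

theorem exp_uS_add (hquot : 0 < (β - α) / (β + α)) (hτpos : ∀ l k y0 y2, 0 < τ l k y0 y2)
    (k : ℤ) :
    exp (uS τ α β l (k + 1) y0 y2 + uS τ α β l k y0 y2) =
      (β - α) / (β + α) * (τ (l + 1) (k + 2) y0 y2 / τ l (k + 2) y0 y2) /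
        (τ (l + 1) k y0 y2 / τ l k y0 y2) := by
  have hpos : ∀ j, 0 < τ (l + 1) j y0 y2 / τ l j y0 y2 := fun j =>
    div_pos (hτpos _ _ _ _) (hτpos _ _ _ _)
  rw [uS_eq_logRatio hquot hτpos, uS_eq_logRatio hquot hτpos, show k + 1 + 1 = k + 2 by ring]
  simp only [logRatio]
  rw [show ∀ c x y z : ℝ, c + y - x + (c + x - z) = c + c + y - z by intros; ring,
    exp_sub, exp_add, exp_add, exp_log (sqrt_pos.2 hquot), mul_self_sqrt hquot.le,
    exp_log (hpos _), exp_log (hpos _)]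

variable (hτ : ∀ l k, Differentiable ℝ (uncurry (τ l k))) (hτpos : ∀ l k y0 y2, 0 < τ l k y0 y2)
include hτ hτpos

theorem Px_logRatio (j : ℤ) :
    Px β (logRatio τ l j) y0 y2 =
      Px β (τ (l + 1) j) y0 y2 / τ (l + 1) j y0 y2 - Px β (τ l j) y0 y2 / τ l j y0 y2 :=
  Px_log_div β (hτ _ _ _) (hτ _ _ _) (fun a b => (hτpos _ _ a b).ne')
    (fun a b => (hτpos _ _ a b).ne')

theorem vS_eq (k : ℤ) :
    vS τ β l k y0 y2 =
      Px β (τ l (k + 2)) y0 y2 / τ l (k + 2) y0 y2 - Px β (τ l k) y0 y2 / τ l k y0 y2 :=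
  Px_log_div β (hτ _ _ _) (hτ _ _ _) (fun a b => (hτpos _ _ a b).ne')
    (fun a b => (hτpos _ _ a b).ne')

theorem Px_uS (hquot : 0 < (β - α) / (β + α)) (γ : ℝ) (k : ℤ) :
    Px γ (uS τ α β l k) y0 y2 =
      Px γ (logRatio τ l (k + 1)) y0 y2 - Px γ (logRatio τ l k) y0 y2 := by
  have hdiff : ∀ j, DifferentiableAt ℝ (uncurry (logRatio τ l j)) (y0, y2) := fun j =>
    (hasFDerivAt_log_div (hτ _ _ _).hasFDerivAt (hτ _ _ _).hasFDerivAt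
      (fun z => (hτpos _ _ z.1 z.2).ne') (fun z => (hτpos _ _ z.1 z.2).ne')).differentiableAt
  rw [uS_eq_logRatio hquot hτpos, Px_const_add_sub γ _ (hdiff _) (hdiff _)]

end TauFunction

section Hirota

variable {f g : ℝ → ℝ → ℝ} {y0 y2 : ℝ}

theorem Dy0_eq_mul_sub_div (hf : f y0 y2 ≠ 0) (hg : g y0 y2 ≠ 0) :
    Dy0 f g y0 y2 = f y0 y2 * g y0 y2 * (Py0 f y0 y2 / f y0 y2 - Py0 g y0 y2 / g y0 y2) := by
  rw [Dy0]
  field_simp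

theorem Dy2_eq_mul_sub_div (hf : f y0 y2 ≠ 0) (hg : g y0 y2 ≠ 0) :
    Dy2 f g y0 y2 = f y0 y2 * g y0 y2 * (Py2 f y0 y2 / f y0 y2 - Py2 g y0 y2 / g y0 y2) := by
  rw [Dy2]
  field_simp

end Hirota

theorem bracket_identity {α β e : ℝ} (hα : α ≠ 0) (hβ : β ≠ 0) (hp : α + β ≠ 0)
    (hm : α - β ≠ 0) (t p r x : ℤ → ℤ → ℝ) (l k : ℤ) (ht : ∀ m j, t m j ≠ 0)
    (h1 : 2 * α * t (l + 1) (k + 1) * t l (k + 1) - (α + β) * t l (k + 2) * t (l + 1) k -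
      (α - β) * t l k * t (l + 1) (k + 2) = 0)
    (h2 : α * β ^ 2 *
        (2 * α * (t (l + 1) (k + 1) * t l (k + 1) * (r (l + 1) (k + 1) - r l (k + 1))) -
          (α + β) * (t l (k + 2) * t (l + 1) k * (r l (k + 2) - r (l + 1) k)) -
          (α - β) * (t l k * t (l + 1) (k + 2) * (r l k - r (l + 1) (k + 2)))) =
      2 * (2 * β ^ 2 - α ^ 2) *
          (t (l + 1) (k + 1) * t l (k + 1) * (p (l + 1) (k + 1) - p l (k + 1))) -
        α * (α + β) * (t l (k + 2) * t (l + 1) k * (p l (k + 2) - p (l + 1) k)) -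
        α * (α - β) * (t l k * t (l + 1) (k + 2) * (p l k - p (l + 1) (k + 2))))
    (hx : ∀ m j, x m j = r m j - p m j / β ^ 2)
    (he : e = (β - α) / (β + α) * (t (l + 1) (k + 2) / t l (k + 2)) / (t (l + 1) k / t l k)) :
    ((x (l + 1) (k + 2) - x l (k + 2)) - (x (l + 1) (k + 1) - x l (k + 1))) / (1 - e⁻¹) -
        ((x (l + 1) (k + 1) - x l (k + 1)) - (x (l + 1) k - x l k)) / (1 - e) -
        (1 + e) / (1 - e) * (x l (k + 2) - x l k) =
      -2 * ((r (l + 1) (k + 1) - p (l + 1) (k + 1) / α ^ 2) -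
        (r l (k + 1) - p l (k + 1) / α ^ 2)) := by
  have := ht l k; have := ht l (k + 1); have := ht l (k + 2)
  have := ht (l + 1) k; have := ht (l + 1) (k + 1); have := ht (l + 1) (k + 2)
  set A := (α + β) * (t l (k + 2) * t (l + 1) k) with hA
  set B := (α - β) * (t l k * t (l + 1) (k + 2)) with hB
  have hA0 : A ≠ 0 := by positivity
  have hB0 : B ≠ 0 := by positivity
  have hsum : A + B = 2 * α * (t (l + 1) (k + 1) * t l (k + 1)) := by
    linear_combination -h1
  have hAB : A + B ≠ 0 := by rw [hsum]; positivity
  have he' : e = -B / A := by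
    rw [he, hA, hB, ← neg_sub α β, add_comm β α]
    field_simp
  have h1e : 1 - e = (A + B) / A := by
    rw [he']
    field_simp
    ring
  have h1einv : 1 - e⁻¹ = (A + B) / B := by
    rw [he', inv_div]
    field_simp
    ring
  have h1pe : 1 + e = (A - B) / A := by
    rw [he']
    field_simp
    ring
  have hbracket :
      ((x (l + 1) (k + 2) - x l (k + 2)) - (x (l + 1) (k + 1) - x l (k + 1))) / (1 - e⁻¹) -
        ((x (l + 1) (k + 1) - x l (k + 1)) - (x (l + 1) k - x l k)) / (1 - e) -
        (1 + e) / (1 - e) * (x l (k + 2) - x l k) =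
      -(x (l + 1) (k + 1) - x l (k + 1)) -
        (A * (x l (k + 2) - x (l + 1) k) + B * (x l k - x (l + 1) (k + 2))) / (A + B) := by
    rw [h1e, h1einv, h1pe]
    field_simp
    ring
  have hhirota : A * (x l (k + 2) - x (l + 1) k) + B * (x l k - x (l + 1) (k + 2)) =
      (A + B) * ((r (l + 1) (k + 1) - r l (k + 1)) -
        (2 * β ^ 2 - α ^ 2) / (α ^ 2 * β ^ 2) * (p (l + 1) (k + 1) - p l (k + 1))) := by
    rw [hsum, hA, hB, hx, hx, hx, hx]
    linear_combination (norm := (field_simp; ring)) (-1 / (α * β ^ 2)) * h2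
  rw [hbracket, hhirota, mul_div_cancel_left₀ _ hAB, hx, hx]
  field_simp
  ring

section Bracket

variable {τ : ℤ → ℤ → ℝ → ℝ → ℝ} {α β : ℝ}

theorem rhsBracket_eq_Pt_logRatio (hα : α ≠ 0) (hquot : 0 < (β - α) / (β + α))
    (hτpos : ∀ l k y0 y2, 0 < τ l k y0 y2) (hτ : ∀ l k, Differentiable ℝ (uncurry (τ l k)))
    (hbil1 : ∀ (l k : ℤ) (y0 y2 : ℝ),
      2 * α * τ (l + 1) k y0 y2 * τ l k y0 y2 -
        (α + β) * τ l (k + 1) y0 y2 * τ (l + 1) (k - 1) y0 y2 -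
        (α - β) * τ l (k - 1) y0 y2 * τ (l + 1) (k + 1) y0 y2 = 0)
    (hbil2 : ∀ (l k : ℤ) (y0 y2 : ℝ),
      α * β ^ 2 *
        (2 * α * Dy2 (τ (l + 1) k) (τ l k) y0 y2 -
          (α + β) * Dy2 (τ l (k + 1)) (τ (l + 1) (k - 1)) y0 y2 -
          (α - β) * Dy2 (τ l (k - 1)) (τ (l + 1) (k + 1)) y0 y2)
      = 2 * (2 * β ^ 2 - α ^ 2) * Dy0 (τ (l + 1) k) (τ l k) y0 y2 -
          α * (α + β) * Dy0 (τ l (k + 1)) (τ (l + 1) (k - 1)) y0 y2 -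
          α * (α - β) * Dy0 (τ l (k - 1)) (τ (l + 1) (k + 1)) y0 y2)
    (l k : ℤ) (y0 y2 : ℝ) :
    rhsBracket τ α β l k y0 y2 = Pt α (logRatio τ l (k + 1)) y0 y2 := by
  have hβ : β ≠ 0 := by rintro rfl; norm_num [hα] at hquot
  have hp : α + β ≠ 0 := by rw [add_comm]; intro h; simp [h] at hquot
  have hm : α - β ≠ 0 := sub_ne_zero.2 fun h => by simp [h] at hquot
  have ht : ∀ m j, τ m j y0 y2 ≠ 0 := fun m j => (hτpos m j y0 y2).ne'
  have hPx : ∀ γ m j, Px γ (τ m j) y0 y2 / τ m j y0 y2 =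
      Py2 (τ m j) y0 y2 / τ m j y0 y2 - Py0 (τ m j) y0 y2 / τ m j y0 y2 / γ ^ 2 := by
    intro γ m j
    rw [Px]
    ring
  have h1 := hbil1 l (k + 1) y0 y2
  have h2 := hbil2 l (k + 1) y0 y2
  rw [show k + 1 + 1 = k + 2 by ring, add_sub_cancel_right] at h1 h2
  simp only [Dy0_eq_mul_sub_div (ht _ _) (ht _ _), Dy2_eq_mul_sub_div (ht _ _) (ht _ _)] at h2
  rw [rhsBracket, Pt_eq_neg_two_mul_Px, ← neg_add', exp_neg]
  simp only [Px_uS hτ hτpos hquot, vS_eq hτ hτpos, Px_logRatio hτ hτpos,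
    show k + 1 + 1 = k + 2 by ring, hPx]
  exact bracket_identity hα hβ hp hm (fun m j => τ m j y0 y2)
    (fun m j => Py0 (τ m j) y0 y2 / τ m j y0 y2) (fun m j => Py2 (τ m j) y0 y2 / τ m j y0 y2) _
    l k ht h1 h2 (fun _ _ => rfl) (exp_uS_add hquot hτpos k)

end Bracket

theorem DDeq1_from_bilinear_general (α β : ℝ) (hα : α ≠ 0)
    (hquot : 0 < (β - α) / (β + α))
    (τ : ℤ → ℤ → ℝ → ℝ → ℝ)
    (hτpos : ∀ l k y0 y2, 0 < τ l k y0 y2)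
    (hτsmooth : ∀ l k, ContDiff ℝ (⊤ : ℕ∞) (fun q : ℝ × ℝ => τ l k q.1 q.2))
    (hbil1 : ∀ (l k : ℤ) (y0 y2 : ℝ),
      2 * α * τ (l + 1) k y0 y2 * τ l k y0 y2 -
        (α + β) * τ l (k + 1) y0 y2 * τ (l + 1) (k - 1) y0 y2 -
        (α - β) * τ l (k - 1) y0 y2 * τ (l + 1) (k + 1) y0 y2 = 0)
    (hbil2 : ∀ (l k : ℤ) (y0 y2 : ℝ),
      α * β ^ 2 *
        (2 * α * Dy2 (τ (l + 1) k) (τ l k) y0 y2 -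
          (α + β) * Dy2 (τ l (k + 1)) (τ (l + 1) (k - 1)) y0 y2 -
          (α - β) * Dy2 (τ l (k - 1)) (τ (l + 1) (k + 1)) y0 y2)
      = 2 * (2 * β ^ 2 - α ^ 2) * Dy0 (τ (l + 1) k) (τ l k) y0 y2 -
          α * (α + β) * Dy0 (τ l (k + 1)) (τ (l + 1) (k - 1)) y0 y2 -
          α * (α - β) * Dy0 (τ l (k - 1)) (τ (l + 1) (k + 1)) y0 y2)
    (l : ℤ) :
    ∀ (k : ℤ) (y0 y2 : ℝ),
      Pt α (uS τ α β l k) y0 y2 =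
        rhsBracket τ α β l k y0 y2 - rhsBracket τ α β l (k - 1) y0 y2 := by
  intro k y0 y2
  have hτ : ∀ l k, Differentiable ℝ (uncurry (τ l k)) := fun l k =>
    (hτsmooth l k).differentiable (by simp)
  rw [rhsBracket_eq_Pt_logRatio hα hquot hτpos hτ hbil1 hbil2,
    rhsBracket_eq_Pt_logRatio hα hquot hτpos hτ hbil1 hbil2, sub_add_cancel,
    Pt_eq_neg_two_mul_Px, Px_uS hτ hτpos hquot, Pt_eq_neg_two_mul_Px, Pt_eq_neg_two_mul_Px]
  ring

/-- derivation of the first equation of the differential-difference system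
from the two bilinear equations:
`∂_t u_k = Δ_{−k}( ∂_x u_{k+1}/(1−e^{−u_{k+1}−u_k}) − ∂_x u_k/(1−e^{u_{k+1}+u_k})
            − (1+e^{u_{k+1}+u_k})/(1−e^{u_{k+1}+u_k}) v_k )`. -/
theorem DDeq1_from_bilinear (α β : ℝ) (hα : α ≠ 0) (hβ : β ≠ 0)
    (hαβ : α ^ 2 ≠ β ^ 2) (hquot : 0 < (β - α) / (β + α))
    (τ : ℤ → ℤ → ℝ → ℝ → ℝ)
    (hτpos : ∀ l k y0 y2, 0 < τ l k y0 y2)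
    (hτsmooth : ∀ l k, ContDiff ℝ (⊤ : ℕ∞) (fun q : ℝ × ℝ => τ l k q.1 q.2))
    (hbil1 : ∀ (l k : ℤ) (y0 y2 : ℝ),
      2 * α * τ (l + 1) k y0 y2 * τ l k y0 y2 -
        (α + β) * τ l (k + 1) y0 y2 * τ (l + 1) (k - 1) y0 y2 -
        (α - β) * τ l (k - 1) y0 y2 * τ (l + 1) (k + 1) y0 y2 = 0)
    (hbil2 : ∀ (l k : ℤ) (y0 y2 : ℝ),
      α * β ^ 2 *
        (2 * α * Dy2 (τ (l + 1) k) (τ l k) y0 y2 -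
          (α + β) * Dy2 (τ l (k + 1)) (τ (l + 1) (k - 1)) y0 y2 -
          (α - β) * Dy2 (τ l (k - 1)) (τ (l + 1) (k + 1)) y0 y2)
      = 2 * (2 * β ^ 2 - α ^ 2) * Dy0 (τ (l + 1) k) (τ l k) y0 y2 -
          α * (α + β) * Dy0 (τ l (k + 1)) (τ (l + 1) (k - 1)) y0 y2 -
          α * (α - β) * Dy0 (τ l (k - 1)) (τ (l + 1) (k + 1)) y0 y2)
    (l : ℤ)
    (hune : ∀ (k : ℤ) (y0 y2 : ℝ),
      uS τ α β l (k + 1) y0 y2 + uS τ α β l k y0 y2 ≠ 0) :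
    ∀ (k : ℤ) (y0 y2 : ℝ),
      Pt α (uS τ α β l k) y0 y2 =
        rhsBracket τ α β l k y0 y2 - rhsBracket τ α β l (k - 1) y0 y2 :=
  DDeq1_from_bilinear_general α β hα hquot τ hτpos hτsmooth hbil1 hbil2 l
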